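/- arXiv:2103.16672 — 3 statements merged into one kernel-verified Lean document; each statement's English description precedes it below -/
import Mathlib

section
/- Let G be a subgroup of the symmetric group S_n acting transitively on {1,...,n}, containing a transposition and a p-cycle for some prime p with p > n/2. Then G = S_n. -/
/-!
A block `B` of `G` that meets the support of the `p`-cycle `σ` is either fixed by some `σ ^ m`
with `0 < m < p`, and then contains the support of that `p`-cycle, so more than half of the points,
or else it has at least `p > n / 2` distinct translates `σ ^ k • B`, so it is a singleton. Hence
`G` is primitive, and by Jordan's theorem a primitive group containing a transposition is `S_n`.
-/

open MulAction Pointwise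

theorem MulAction.le_ncard_orbit_of_pow_smul_ne {G X : Type*} [Group G] [MulAction G X]
    [Finite X] {g : G} {x : X} {p : ℕ} (h : ∀ m, 0 < m → m < p → g ^ m • x ≠ x) :
    p ≤ (orbit G x).ncard := by
  calc p = (Finset.range p : Set ℕ).ncard := by simp
    _ ≤ (orbit G x).ncard := by
      refine Set.ncard_le_ncard_of_injOn (fun k ↦ g ^ k • x) (fun k _ ↦ mem_orbit x _) ?_
      intro i hi j hj hij
      wlog hle : i ≤ j generalizing i j
      · exact (this hj hi hij.symm (by omega)).symm
      have hfix : g ^ (j - i) • x = x := by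
        apply smul_left_cancel (g ^ i)
        rw [smul_smul, ← pow_add, Nat.add_sub_cancel' hle]
        exact hij.symm
      by_contra hne
      simp only [Finset.coe_range, Set.mem_Iio] at hi hj
      exact h (j - i) (by omega) (by omega) hfix

namespace Equiv.Perm

variable {α : Type*} [Fintype α] [DecidableEq α]

theorem IsCycle.support_subset_of_mapsTo {σ : Perm α} (hσ : σ.IsCycle) {B : Set α}
    (hB : Set.MapsTo σ B B) {a : α} (ha : a ∈ B) (haσ : a ∈ σ.support) :
    (σ.support : Set α) ⊆ B := by
  intro b hb
  obtain ⟨i, rfl⟩ := hσ.exists_pow_eq (mem_support.mp haσ) (mem_support.mp hb)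
  rw [coe_pow]
  exact hB.iterate i ha

theorem isPreprimitive_of_prime_cycle_mem {G : Subgroup (Perm α)} [IsPretransitive G α]
    {σ : Perm α} (hσG : σ ∈ G) (hσ : σ.IsCycle) {p : ℕ} (hp : p.Prime)
    (hσp : σ.support.card = p) (hcard : Fintype.card α < 2 * p) : IsPreprimitive G α := by
  obtain ⟨a, ha⟩ : σ.support.Nonempty := Finset.card_pos.mp (hσp ▸ hp.pos)
  refine .of_isTrivialBlock_base a fun {B} haB hB ↦ ?_
  set g : G := ⟨σ, hσG⟩
  by_cases hfix : ∃ m, 0 < m ∧ m < p ∧ g ^ m • B = B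
  · obtain ⟨m, hm0, hmp, hgm⟩ := hfix
    have hcop : m.Coprime (orderOf σ) := by
      rw [hσ.orderOf, hσp, Nat.coprime_comm, hp.coprime_iff_not_dvd]
      exact Nat.not_dvd_of_pos_of_lt hm0 hmp
    have hsupp : (σ ^ m).support = σ.support := support_pow_coprime hcop
    have hmaps : Set.MapsTo (σ ^ m : Perm α) B B := fun x hx ↦
      hgm ▸ Set.smul_mem_smul_set (a := g ^ m) hx
    have hsub := (hσ.pow_iff.mpr hcop).support_subset_of_mapsTo hmaps haB (hsupp ▸ ha)
    have hpB : p ≤ B.ncard := by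
      simpa [hsupp, hσp] using Set.ncard_le_ncard hsub
    exact .inr (hB.eq_univ_of_card_lt (by rw [Nat.card_eq_fintype_card]; omega))
  · push Not at hfix
    have hpOrbit := le_ncard_orbit_of_pow_smul_ne (x := B) hfix
    exact .inl (hB.subsingleton_of_card_lt (by rw [Nat.card_eq_fintype_card]; omega))

end Equiv.Perm

theorem transitive_swap_pcycle_eq_top (n : ℕ) (G : Subgroup (Equiv.Perm (Fin n)))
    (htrans : ∀ i j : Fin n, ∃ σ ∈ G, σ i = j)
    (hswap : ∃ σ ∈ G, σ.IsSwap)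
    (p : ℕ) (hp : p.Prime) (hp2 : n < 2 * p)
    (hcycle : ∃ σ ∈ G, σ.IsCycle ∧ σ.support.card = p) :
    G = ⊤ := by
  have : IsPretransitive G (Fin n) := ⟨fun i j ↦
    let ⟨σ, hσG, hσ⟩ := htrans i j
    ⟨⟨σ, hσG⟩, hσ⟩⟩
  obtain ⟨σ, hσG, hσ, hσp⟩ := hcycle
  obtain ⟨τ, hτG, hτ⟩ := hswap
  have hprim := Equiv.Perm.isPreprimitive_of_prime_cycle_mem hσG hσ hp hσp (by simpa using hp2)
  exact Equiv.Perm.subgroup_eq_top_of_isPreprimitive_of_isSwap_mem hprim τ hτ hτG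
end

section
/- Fix an integer m ≥ 2 and suppose n > m. Let G ⊆ S_n be a permutation group on {1,...,n} such that: (i) G is transitive; (ii) G contains a cycle σ with n - m ≤ length(σ) < n; (iii) G contains a transposition; (iv) G contains a q-cycle for some prime q > m. Then G = S_n. -/
open Equiv Equiv.Perm Finset

/-- The relation "equal or the transposition lies in `G`". -/
def relG {n : ℕ} (G : Subgroup (Equiv.Perm (Fin n))) (i j : Fin n) : Prop :=
  i = j ∨ Equiv.swap i j ∈ G

/-- The "block" of a point: all points related to it. -/
noncomputable def blkG {n : ℕ} (G : Subgroup (Equiv.Perm (Fin n))) (i : Fin n) :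
    Finset (Fin n) :=
  @Finset.filter _ (relG G i) (Classical.decPred _) Finset.univ

lemma mem_blkG {n : ℕ} (G : Subgroup (Equiv.Perm (Fin n))) (i j : Fin n) :
    j ∈ blkG G i ↔ relG G i j := by
  simp [blkG, Finset.mem_filter]

lemma relG_refl {n : ℕ} (G : Subgroup (Equiv.Perm (Fin n))) (i : Fin n) : relG G i i :=
  Or.inl rfl

lemma relG_symm {n : ℕ} {G : Subgroup (Equiv.Perm (Fin n))} {i j : Fin n} :
    relG G i j → relG G j i := by
  rintro (rfl | h)
  · exact Or.inl rfl
  · exact Or.inr (by rwa [Equiv.swap_comm])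

lemma relG_trans {n : ℕ} {G : Subgroup (Equiv.Perm (Fin n))} {i j k : Fin n} :
    relG G i j → relG G j k → relG G i k := by
  rintro (rfl | hij) (rfl | hjk)
  · exact Or.inl rfl
  · exact Or.inr hjk
  · exact Or.inr hij
  · by_cases hik : i = k
    · exact Or.inl hik
    · by_cases hij' : i = j
      · subst hij'; exact Or.inr hjk
      · right
        have key : Equiv.swap j k * Equiv.swap i j * Equiv.swap j k = Equiv.swap k i :=
          Equiv.swap_mul_swap_mul_swap hij' hik
        have : Equiv.swap k i ∈ G := by
          rw [← key]; exact G.mul_mem (G.mul_mem hjk hij) hjk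
        rwa [Equiv.swap_comm]

lemma relG_map {n : ℕ} {G : Subgroup (Equiv.Perm (Fin n))} {g : Equiv.Perm (Fin n)}
    (hg : g ∈ G) {i j : Fin n} (h : relG G i j) : relG G (g i) (g j) := by
  rcases h with rfl | h
  · exact Or.inl rfl
  · right
    rw [Equiv.swap_apply_apply]
    exact G.mul_mem (G.mul_mem hg h) (G.inv_mem hg)

lemma relG_map_iff {n : ℕ} {G : Subgroup (Equiv.Perm (Fin n))} {g : Equiv.Perm (Fin n)}
    (hg : g ∈ G) {i j : Fin n} : relG G (g i) (g j) ↔ relG G i j := by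
  constructor
  · intro h
    have := relG_map (G.inv_mem hg) h
    simpa using this
  · exact relG_map hg

lemma blkG_eq_of_rel {n : ℕ} {G : Subgroup (Equiv.Perm (Fin n))} {i j : Fin n}
    (h : relG G i j) : blkG G i = blkG G j := by
  ext z
  rw [mem_blkG, mem_blkG]
  exact ⟨fun hz => relG_trans (relG_symm h) hz, fun hz => relG_trans h hz⟩

/-- A finset that is a union of blocks has cardinality divisible by the block size. -/
lemma dvd_card_of_blocks {α : Type*} [DecidableEq α] (B : α → Finset α) (d : ℕ)
    (hmem : ∀ i, i ∈ B i) (heq : ∀ i j, j ∈ B i → B i = B j)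
    (hcard : ∀ i, (B i).card = d) :
    ∀ (N : ℕ) (S : Finset α), S.card ≤ N → (∀ y ∈ S, B y ⊆ S) → d ∣ S.card := by
  intro N
  induction N with
  | zero =>
    intro S hS _
    rw [Nat.le_zero] at hS
    simp [hS]
  | succ N ih =>
    intro S hS hsub
    rcases S.eq_empty_or_nonempty with rfl | ⟨y, hy⟩
    · simp
    · have hBy : B y ⊆ S := hsub y hy
      have hsplit : (S \ B y).card + (B y).card = S.card :=
        Finset.card_sdiff_add_card_eq_card hBy
      have hdpos : 0 < d := by
        have := hcard y
        have := Finset.card_pos.mpr ⟨y, hmem y⟩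
        omega
      have hsub' : ∀ z ∈ S \ B y, B z ⊆ S \ B y := by
        intro z hz w hw
        have hzS := (Finset.mem_sdiff.mp hz).1
        have hzB := (Finset.mem_sdiff.mp hz).2
        refine Finset.mem_sdiff.mpr ⟨hsub z hzS hw, ?_⟩
        intro hwB
        have h1 := heq z w hw
        have h2 := heq y w hwB
        apply hzB
        rw [h2, ← h1]
        exact hmem z
      have hle : (S \ B y).card ≤ N := by
        have := hcard y
        omega
      have hdvd := ih (S \ B y) hle hsub'
      have : S.card = (S \ B y).card + d := by rw [← hsplit, hcard y]
      rw [this]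
      exact Nat.dvd_add hdvd dvd_rfl

theorem criteria_for_Sn (m n : ℕ) (hm : 2 ≤ m) (hn : m < n)
    (G : Subgroup (Equiv.Perm (Fin n)))
    (htrans : ∀ i j : Fin n, ∃ σ ∈ G, σ i = j)
    (hcycle : ∃ σ ∈ G, σ.IsCycle ∧ n - m ≤ σ.support.card ∧ σ.support.card < n)
    (hswap : ∃ τ ∈ G, τ.IsSwap)
    (hq : ∃ q : ℕ, q.Prime ∧ m < q ∧ ∃ θ ∈ G, θ.IsCycle ∧ θ.support.card = q) :
    G = ⊤ := by
  classical
  -- it suffices to show that all transpositions lie in G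
  suffices hAll : ∀ i j : Fin n, i ≠ j → Equiv.swap i j ∈ G by
    rw [eq_top_iff, ← Equiv.Perm.closure_isSwap, Subgroup.closure_le]
    rintro τ ⟨x, y, hxy, rfl⟩
    exact hAll x y hxy
  by_contra hcon
  push_neg at hcon
  obtain ⟨a₀, b₀, hab₀, hnotin⟩ := hcon
  have hnotr : ¬ relG G a₀ b₀ := by
    rintro (h | h)
    · exact hab₀ h
    · exact hnotin h
  -- block cardinalities are all equal
  have hBcard : ∀ i j : Fin n, (blkG G i).card = (blkG G j).card := by
    intro i j
    obtain ⟨g, hg, hgi⟩ := htrans i j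
    have himg : (blkG G i).image g = blkG G j := by
      ext z
      simp only [Finset.mem_image, mem_blkG]
      constructor
      · rintro ⟨y, hy, rfl⟩
        have := relG_map hg hy
        rwa [hgi] at this
      · intro hz
        refine ⟨g⁻¹ z, ?_, by simp⟩
        have := relG_map (G.inv_mem hg) hz
        rwa [show g⁻¹ j = i by rw [← hgi]; simp] at this
    rw [← himg, Finset.card_image_of_injective _ g.injective]
  set d := (blkG G a₀).card with hd_def
  have hd : ∀ i : Fin n, (blkG G i).card = d := fun i => hBcard i a₀
  -- d ≥ 2
  obtain ⟨τ, hτG, a, b, hab, rfl⟩ := hswap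
  have hd2 : 2 ≤ d := by
    rw [← hd a]
    have ha : a ∈ blkG G a := (mem_blkG G a a).mpr (relG_refl G a)
    have hb : b ∈ blkG G a := (mem_blkG G a b).mpr (Or.inr hτG)
    exact Finset.one_lt_card.mpr ⟨a, ha, b, hb, hab⟩
  -- 2d ≤ n
  have h2dn : 2 * d ≤ n := by
    have hdisj : Disjoint (blkG G a₀) (blkG G b₀) := by
      rw [Finset.disjoint_left]
      intro z hz1 hz2
      rw [mem_blkG] at hz1 hz2
      exact hnotr (relG_trans hz1 (relG_symm hz2))
    have h1 := Finset.card_le_univ (blkG G a₀ ∪ blkG G b₀)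
    rw [Finset.card_union_of_disjoint hdisj, hd a₀, hd b₀, Fintype.card_fin] at h1
    omega
  -- dichotomy for cycles in G
  have hdichot : ∀ ρ : Equiv.Perm (Fin n), ρ ∈ G → ρ.IsCycle →
      (∃ x : Fin n, ¬ relG G x (ρ x)) → ∀ y : Fin n, ρ y ≠ y → ¬ relG G y (ρ y) := by
    rintro ρ hρG hρc ⟨x, hx⟩ y hy hryy
    have hxmove : ρ x ≠ x := fun h => hx (by rw [h]; exact relG_refl G x)
    obtain ⟨k, hk⟩ := hρc.exists_pow_eq hxmove hy
    have hmemk : (ρ ^ k : Equiv.Perm (Fin n)) ∈ G := G.pow_mem hρG k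
    apply hx
    have hcomm : ρ ((ρ ^ k) x) = (ρ ^ k) (ρ x) := by
      rw [← Equiv.Perm.mul_apply, ← Equiv.Perm.mul_apply, ← pow_succ, ← pow_succ']
    rw [← relG_map_iff hmemk]
    rw [← hcomm, hk]
    exact hryy
  -- for a cycle all of whose steps are related, the support is in one block
  have hsupp_sub : ∀ ρ : Equiv.Perm (Fin n), ρ ∈ G → ρ.IsCycle →
      (∀ y : Fin n, relG G y (ρ y)) → ∀ x : Fin n, ρ x ≠ x →
      ρ.support ⊆ blkG G x := by
    intro ρ hρG hρc hall x hx y hy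
    rw [Equiv.Perm.mem_support] at hy
    obtain ⟨k, hk⟩ := hρc.exists_pow_eq hx hy
    rw [mem_blkG, ← hk]
    clear hk hy
    induction k with
    | zero => simpa using relG_refl G x
    | succ k ih =>
      have : (ρ ^ (k + 1)) x = ρ ((ρ ^ k) x) := by
        rw [← Equiv.Perm.mul_apply, ← pow_succ']
      rw [this]
      exact relG_trans ih (hall _)
  -- q ≤ d
  obtain ⟨q, hqp, hmq, θ, hθG, hθc, hθcard⟩ := hq
  have hqd : q ≤ d := by
    by_cases hall : ∀ y : Fin n, relG G y (θ y)
    · obtain ⟨x, hx, -⟩ := id hθc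
      have := Finset.card_le_card (hsupp_sub θ hθG hθc hall x hx)
      rwa [hθcard, hd x] at this
    · push_neg at hall
      obtain ⟨x, hx⟩ := hall
      exfalso
      have hxmove : θ x ≠ x := fun h => hx (by rw [h]; exact relG_refl G x)
      have hmoved : ∀ y : Fin n, θ y ≠ y → ¬ relG G y (θ y) :=
        hdichot θ hθG hθc ⟨x, hx⟩
      -- the support of θ is a union of blocks
      have hunion : ∀ y ∈ θ.support, blkG G y ⊆ θ.support := by
        intro y hy z hz
        rw [Equiv.Perm.mem_support] at hy ⊢
        rw [mem_blkG] at hz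
        intro hzfix
        apply hmoved y hy
        have h1 : relG G (θ y) (θ z) := relG_map hθG hz
        rw [hzfix] at h1
        exact relG_trans hz (relG_symm h1)
      -- hence d divides q
      have hdvd : d ∣ q := by
        have := dvd_card_of_blocks (blkG G) d
          (fun i => (mem_blkG G i i).mpr (relG_refl G i))
          (fun i j hj => blkG_eq_of_rel ((mem_blkG G i j).mp hj))
          hd θ.support.card θ.support le_rfl hunion
        rwa [hθcard] at this
      have hdq : d = q := by
        rcases (Nat.Prime.eq_one_or_self_of_dvd hqp d hdvd) with h | h
        · omega
        · exact h
      -- then the block of x is the whole support, contradiction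
      have hxsupp : x ∈ θ.support := Equiv.Perm.mem_support.mpr hxmove
      have hsub : blkG G x ⊆ θ.support := hunion x hxsupp
      have heq : blkG G x = θ.support := by
        apply Finset.eq_of_subset_of_card_le hsub
        rw [hθcard, hd x, hdq]
      have : θ x ∈ blkG G x := by
        rw [heq, Equiv.Perm.mem_support]
        exact fun h => hxmove (θ.injective h)
      rw [mem_blkG] at this
      exact hx this
  -- now analyze σ
  obtain ⟨σ, hσG, hσc, hσlb, hσub⟩ := hcycle
  by_cases hallσ : ∀ y : Fin n, relG G y (σ y)
  · -- support of σ is in one block, so σ.support.card ≤ d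
    obtain ⟨x, hx, -⟩ := id hσc
    have hLd : σ.support.card ≤ d := by
      have := Finset.card_le_card (hsupp_sub σ hσG hσc hallσ x hx)
      rwa [hd x] at this
    omega
  · push_neg at hallσ
    obtain ⟨x, hx⟩ := hallσ
    have hmoved : ∀ y : Fin n, σ y ≠ y → ¬ relG G y (σ y) :=
      hdichot σ hσG hσc ⟨x, hx⟩
    -- there's a fixed point f
    have hex : ∃ f : Fin n, f ∉ σ.support := by
      by_contra h
      push_neg at h
      have : σ.support = Finset.univ := Finset.eq_univ_iff_forall.mpr h
      rw [this, Finset.card_univ, Fintype.card_fin] at hσub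
      omega
    obtain ⟨f, hf⟩ := hex
    have hffix : σ f = f := Equiv.Perm.notMem_support.mp hf
    -- the block of f consists of fixed points
    have hBf : blkG G f ⊆ σ.supportᶜ := by
      intro z hz
      rw [Finset.mem_compl, Equiv.Perm.notMem_support]
      rw [mem_blkG] at hz
      by_contra hzmove
      apply hmoved z hzmove
      have h1 : relG G (σ f) (σ z) := relG_map hσG hz
      rw [hffix] at h1
      exact relG_trans (relG_symm hz) h1
    have hdm : d ≤ m := by
      have h1 := Finset.card_le_card hBf
      rw [hd f, Finset.card_compl, Fintype.card_fin] at h1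
      omega
    omega
end

section
/- Let f(x) ∈ ℤ[x] be a nonconstant squarefree polynomial. Then there are infinitely many primes p such that, for some integer x₀, p divides f(x₀) and p² does not divide f(x₀). -/
open Polynomial

theorem infinitely_many_primes_dividing_values_exactly_once (f : Polynomial ℤ)
    (hf : 0 < f.natDegree) (hsf : Squarefree (f.map (Int.castRingHom ℚ))) :
    {p : ℕ | p.Prime ∧ ∃ x₀ : ℤ,
      (p : ℤ) ∣ f.eval x₀ ∧ ¬ ((p : ℤ)^2 ∣ f.eval x₀)}.Infinite := by
  by_contra hfin
  rw [Set.not_infinite] at hfin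
  have hf0 : f ≠ 0 := fun h => by simp [h] at hf
  -- Bezout identity with integer coefficients
  have hsep : (f.map (Int.castRingHom ℚ)).Separable :=
    PerfectField.separable_iff_squarefree.mpr hsf
  obtain ⟨u, v, huv⟩ := hsep
  obtain ⟨b₁, hb₁⟩ := IsLocalization.integerNormalization_map_to_map (nonZeroDivisors ℤ) u
  obtain ⟨b₂, hb₂⟩ := IsLocalization.integerNormalization_map_to_map (nonZeroDivisors ℤ) v
  set a : Polynomial ℤ := IsLocalization.integerNormalization (nonZeroDivisors ℤ) u with ha
  set b : Polynomial ℤ := IsLocalization.integerNormalization (nonZeroDivisors ℤ) v with hb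
  set D : ℤ := (b₁ : ℤ) * (b₂ : ℤ) with hD
  have hD0 : D ≠ 0 := mul_ne_zero (nonZeroDivisors.coe_ne_zero b₁) (nonZeroDivisors.coe_ne_zero b₂)
  rw [algebraMap_int_eq] at hb₁ hb₂
  have key : (C (b₂ : ℤ) * a) * f + (C (b₁ : ℤ) * b) * f.derivative = C D := by
    apply Polynomial.map_injective (Int.castRingHom ℚ) Int.cast_injective
    rw [Polynomial.map_add, Polynomial.map_mul, Polynomial.map_mul, Polynomial.map_mul,
      Polynomial.map_mul, Polynomial.map_C, Polynomial.map_C, Polynomial.map_C,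
      ← derivative_map, hb₁, hb₂, hD]
    simp only [zsmul_eq_mul, eq_intCast, Int.cast_mul, map_mul, map_intCast]
    linear_combination (((b₁ : ℤ) : ℚ[X]) * ((b₂ : ℤ) : ℚ[X])) * huv
  have hBez : ∀ x : ℤ, ((b₂ : ℤ) * a.eval x) * f.eval x
      + ((b₁ : ℤ) * b.eval x) * f.derivative.eval x = D := by
    intro x
    have := congrArg (eval x) key
    simpa using this
  -- choose n₀ with f n₀ ≠ 0
  obtain ⟨n₀, hn₀⟩ : ∃ n : ℤ, f.eval n ≠ 0 := by
    by_contra h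
    push_neg at h
    refine hf0 (f.eq_zero_of_infinite_isRoot ?_)
    have : {x : ℤ | f.IsRoot x} = Set.univ := Set.eq_univ_of_forall h
    rw [this]
    exact Set.infinite_univ
  set c : ℤ := f.eval n₀ with hc
  -- the finite set of "excluded" primes
  set S : Finset ℕ := hfin.toFinset ∪ D.natAbs.primeFactors with hS
  set P : ℤ := ∏ p ∈ S, (p : ℤ) with hP
  have hP0 : P ≠ 0 := by
    rw [hP]
    apply Finset.prod_ne_zero_iff.mpr
    intro p hp hzero
    have hp0 : p = 0 := by exact_mod_cast hzero
    subst hp0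
    rw [hS, Finset.mem_union] at hp
    rcases hp with h | h
    · exact Nat.not_prime_zero (hfin.mem_toFinset.mp h).1
    · simp at h
  -- the set of x with small |f x| is finite
  have hbad : {x : ℤ | |f.eval x| ≤ |c|}.Finite := by
    have hsub : {x : ℤ | |f.eval x| ≤ |c|} ⊆
        ⋃ m ∈ (Finset.Icc (-|c|) |c| : Finset ℤ), {x : ℤ | (f - C m).IsRoot x} := by
      intro x hx
      simp only [Set.mem_setOf_eq] at hx
      refine Set.mem_biUnion (Finset.mem_Icc.mpr (abs_le.mp hx)) ?_
      simp [IsRoot]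
    refine Set.Finite.subset (Set.Finite.biUnion (Finset.finite_toSet _) ?_) hsub
    intro m _
    have hgm : f - C m ≠ 0 := by
      intro h
      have : f = C m := by linear_combination h
      rw [this] at hf
      simp at hf
    exact Set.not_infinite.mp fun h => hgm ((f - C m).eq_zero_of_infinite_isRoot h)
  -- choose x = n₀ + c*P*t with |f x| > |c|
  have hcP0 : c * P ≠ 0 := mul_ne_zero hn₀ hP0
  have hginj : Function.Injective (fun t : ℤ => n₀ + c * P * t) := by
    intro s t h
    simp only at h
    exact mul_left_cancel₀ hcP0 (by linarith)
  obtain ⟨x, hxmem, hxbad⟩ :=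
    ((Set.infinite_range_of_injective hginj).diff hbad).nonempty
  obtain ⟨t, rfl⟩ := hxmem
  set x : ℤ := n₀ + c * P * t with hx
  have hxbig : |c| < |f.eval x| := by
    by_contra h
    push_neg at h
    exact hxbad h
  -- f(x) = c * w with w ≡ 1 mod P
  have hdvd : c * P * t ∣ f.eval x - c := by
    have := sub_dvd_eval_sub x n₀ f
    simpa [hx] using this
  obtain ⟨k, hk⟩ := hdvd
  set w : ℤ := 1 + P * t * k with hw
  have hweq : f.eval x = c * w := by rw [hw]; linarith [hk]
  have hc1 : (0:ℤ) < |c| := abs_pos.mpr hn₀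
  have hw1 : 1 < |w| := by
    have : |c| * 1 < |c| * |w| := by
      rw [mul_one, ← abs_mul, ← hweq]; exact hxbig
    exact lt_of_mul_lt_mul_left this (le_of_lt hc1)
  -- get a prime divisor p of w
  obtain ⟨p, hp, hpw'⟩ := Nat.exists_prime_and_dvd (n := w.natAbs) (by
    intro h
    rw [Int.abs_eq_natAbs, h] at hw1
    norm_num at hw1)
  have hpw : (p : ℤ) ∣ w := by
    have : ((p : ℤ)) ∣ (w.natAbs : ℤ) := Int.natCast_dvd_natCast.mpr hpw'
    exact Int.dvd_natAbs.mp this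
  -- p ∉ S
  have hpS : p ∉ S := by
    intro hmem
    have h1 : (p : ℤ) ∣ P := by
      rw [hP]
      exact Finset.dvd_prod_of_mem _ hmem
    have h2 : (p : ℤ) ∣ w - 1 := by
      have he : w - 1 = P * (t * k) := by rw [hw]; ring
      rw [he]
      exact h1.mul_right _
    have h3 : (p : ℤ) ∣ 1 := by
      have := hpw.sub h2
      simpa using this
    have h4 : (p : ℤ) ≤ 1 := Int.le_of_dvd one_pos h3
    have h5 : (1 : ℤ) < p := by exact_mod_cast hp.one_lt
    omega
  -- p does not divide D
  have hpD : ¬ (p : ℤ) ∣ D := by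
    intro hdvdD
    apply hpS
    rw [hS]
    apply Finset.mem_union_right
    rw [Nat.mem_primeFactors]
    refine ⟨hp, ?_, by simpa using hD0⟩
    have : (p : ℤ).natAbs ∣ D.natAbs := Int.natAbs_dvd_natAbs.mpr hdvdD
    simpa using this
  -- p divides f(x)
  have hpfx : (p : ℤ) ∣ f.eval x := hweq ▸ hpw.mul_left c
  have hppos : (0:ℤ) < (p : ℤ) := by exact_mod_cast hp.pos
  -- main claim: p is in the target set
  have hclaim : p.Prime ∧ ∃ x₀ : ℤ, (p : ℤ) ∣ f.eval x₀ ∧ ¬ ((p : ℤ)^2 ∣ f.eval x₀) := by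
    refine ⟨hp, ?_⟩
    by_cases hsq : (p : ℤ)^2 ∣ f.eval x
    · -- use x + p
      have hpd : ¬ (p : ℤ) ∣ f.derivative.eval x := by
        intro hder
        apply hpD
        rw [← hBez x]
        exact dvd_add ((hpfx.mul_left _))  ((hder.mul_left _))
      obtain ⟨K, hK⟩ := f.binomExpansion x (p : ℤ)
      refine ⟨x + p, ?_, ?_⟩
      · rw [hK]
        exact dvd_add (dvd_add hpfx (Dvd.intro_left _ rfl)) ⟨K * p, by ring⟩
      · intro habs
        have h1 : (p : ℤ)^2 ∣ f.derivative.eval x * p := by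
          have h2 : f.derivative.eval x * (p:ℤ) = f.eval (x + p) - f.eval x - K * p^2 := by
            rw [hK]; ring
          rw [h2]
          exact (habs.sub hsq).sub ⟨K, by ring⟩
        obtain ⟨m, hm⟩ := h1
        apply hpd
        refine ⟨m, ?_⟩
        have hp0 : (p:ℤ) ≠ 0 := ne_of_gt hppos
        exact mul_right_cancel₀ hp0 (by rw [hm]; ring)
    · exact ⟨x, hpfx, hsq⟩
  apply hpS
  rw [hS]
  apply Finset.mem_union_left
  exact hfin.mem_toFinset.mpr hclaim
end
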